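/- arXiv:2401.11411 — 5 statements merged into one kernel-verified Lean document; each statement's English description precedes it below -/
import Mathlib

section
/- The Cesàro operator C: L²(0,1) → L²(0,1) is not a compact operator. Specifically, the sequence xₙ(t) = √n·χ_{(0,1/n]}(t) converges weakly to 0 in L²(0,1), but ‖Cxₙ‖²_{L²(0,1)} → 2 as n → ∞. -/
open MeasureTheory Set Filter

/-- The measure of the unit interval (0,1] as a restriction of Lebesgue measure. -/
noncomputable def mu01 : Measure ℝ := volume.restrict (Ioc 0 1)

/-- The Cesàro operator: `[Cx](s) = (1/s) ∫₀ˢ x(t) dt`. -/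
noncomputable def cesaro (x : ℝ → ℝ) : ℝ → ℝ :=
  fun s => (1 / s) * ∫ t in Ioc (0:ℝ) s, x t

/-- The sequence `xₙ(t) = √n · χ_{(0,1/n]}(t)`. -/
noncomputable def xseq (n : ℕ) : ℝ → ℝ :=
  fun t => Real.sqrt n * (Ioc (0:ℝ) (1 / (n:ℝ))).indicator (fun _ => (1:ℝ)) t

/-!
`xₙ` is a unit vector concentrating at `0`, so it tends weakly to `0`: by Cauchy–Schwarz on
`(0, 1/n]`, `⟨xₙ, y⟩² ≤ ∫_{(0,1/n]} y² → 0`. On the other hand `Cxₙ = √n` on `(0, 1/n]` and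
`Cxₙ(s) = 1/(√n s)` beyond, whence `‖Cxₙ‖² = 2 - 1/n`. Since `Cxₙ → 0` pointwise on `(0, 1]`,
Fatou's lemma forces any `L²` limit of a subsequence of `(Cxₙ)` to vanish a.e., which
contradicts `‖Cxₙ‖ ≥ ‖xₙ‖ = 1`.
-/

theorem sq_setIntegral_le_measureReal_mul_setIntegral_sq {α : Type*} [MeasurableSpace α]
    {μ : Measure α} [IsFiniteMeasure μ] {f : α → ℝ} (hf : MemLp f 2 μ) (s : Set α) :
    (∫ x in s, f x ∂μ) ^ 2 ≤ μ.real s * ∫ x in s, f x ^ 2 ∂μ := by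
  rcases eq_or_ne (μ s) 0 with hs | hs
  · simp [Measure.restrict_eq_zero.mpr hs]
  have hpos : 0 < μ.real s := ENNReal.toReal_pos hs (measure_ne_top μ s)
  have jensen := (Even.convexOn_pow (𝕜 := ℝ) even_two).map_set_average_le
    (continuous_pow 2).continuousOn isClosed_univ hs (measure_ne_top μ s) (by simp)
    (hf.integrable one_le_two).integrableOn hf.integrable_sq.integrableOn
  rw [setAverage_eq, setAverage_eq, smul_eq_mul, smul_eq_mul, mul_pow, inv_pow,
    ← div_eq_inv_mul, ← div_eq_inv_mul, div_le_div_iff₀ (by positivity) hpos, sq (μ.real s),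
    ← mul_assoc, mul_comm (∫ x in s, f x ^ 2 ∂μ)] at jensen
  exact le_of_mul_le_mul_right jensen hpos

theorem ae_eq_zero_of_tendsto_eLpNorm_sub {α E : Type*} [MeasurableSpace α] {μ : Measure α}
    [NormedAddCommGroup E] {p : ENNReal} (hp : p ≠ 0) {f : ℕ → α → E} {g : α → E}
    (hf : ∀ k, AEStronglyMeasurable (f k) μ) (hg : AEStronglyMeasurable g μ)
    (hf_ae : ∀ᵐ x ∂μ, Tendsto (fun k => f k x) atTop (nhds 0))
    (hfg : Tendsto (fun k => eLpNorm (f k - g) p μ) atTop (nhds 0)) :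
    g =ᵐ[μ] 0 := by
  have hfatou := Lp.eLpNorm_lim_le_liminf_eLpNorm (p := p) (fun k => (hf k).sub hg) (-g) <| by
    filter_upwards [hf_ae] with x hx
    simpa using hx.sub_const (g x)
  rw [hfg.liminf_eq, nonpos_iff_eq_zero, eLpNorm_neg, eLpNorm_eq_zero_iff hg hp] at hfatou
  exact hfatou

instance : IsFiniteMeasure mu01 := ⟨by simp [mu01]⟩

lemma mu01_Ioc_zero {a : ℝ} (ha : a ≤ 1) : mu01 (Ioc 0 a) = ENNReal.ofReal a := by
  rw [mu01, Measure.restrict_apply measurableSet_Ioc, Ioc_inter_Ioc, max_self, min_eq_left ha,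
    Real.volume_Ioc, sub_zero]

lemma one_div_natCast_le_one (n : ℕ) : 1 / (n : ℝ) ≤ 1 := by
  rcases n.eq_zero_or_pos with rfl | hn
  · simp
  · exact div_le_one_of_le₀ (by exact_mod_cast hn) n.cast_nonneg

lemma xseq_eq_indicator (n : ℕ) : xseq n = (Ioc 0 (1 / (n : ℝ))).indicator fun _ => √n := by
  ext t
  simp only [xseq, indicator_apply]
  split_ifs <;> simp

lemma mu01_real_Ioc_zero_one_div (n : ℕ) : mu01.real (Ioc 0 (1 / (n : ℝ))) = 1 / n := by
  rw [measureReal_def, mu01_Ioc_zero (one_div_natCast_le_one n),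
    ENNReal.toReal_ofReal (by positivity)]

lemma tendsto_setIntegral_Ioc_zero_one_div {f : ℝ → ℝ} (hf : Integrable f mu01) :
    Tendsto (fun n : ℕ => ∫ t in Ioc 0 (1 / (n : ℝ)), f t ∂mu01) atTop (nhds 0) := by
  refine hf.tendsto_setIntegral_nhds_zero ?_
  simp only [Function.comp_def, mu01_Ioc_zero (one_div_natCast_le_one _)]
  simpa using ENNReal.tendsto_ofReal tendsto_one_div_atTop_nhds_zero_nat

lemma integral_xseq_mul (n : ℕ) (y : ℝ → ℝ) :
    ∫ t, xseq n t * y t ∂mu01 = √n * ∫ t in Ioc 0 (1 / (n : ℝ)), y t ∂mu01 := by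
  simp_rw [xseq_eq_indicator, ← indicator_mul_left, integral_indicator measurableSet_Ioc,
    integral_const_mul]

lemma sq_integral_xseq_mul_le {y : ℝ → ℝ} (hy : MemLp y 2 mu01) (n : ℕ) :
    (∫ t, xseq n t * y t ∂mu01) ^ 2 ≤ ∫ t in Ioc 0 (1 / (n : ℝ)), y t ^ 2 ∂mu01 := by
  have hCS := sq_setIntegral_le_measureReal_mul_setIntegral_sq hy (Ioc 0 (1 / (n : ℝ)))
  rw [mu01_real_Ioc_zero_one_div] at hCS
  have hn : (n : ℝ) * (1 / n) ≤ 1 := by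
    rcases n.eq_zero_or_pos with rfl | hn
    · simp
    · rw [mul_one_div_cancel (by positivity)]
  have ha : 0 ≤ ∫ t in Ioc 0 (1 / (n : ℝ)), y t ^ 2 ∂mu01 := integral_nonneg fun t => sq_nonneg _
  calc (∫ t, xseq n t * y t ∂mu01) ^ 2
      = n * (∫ t in Ioc 0 (1 / (n : ℝ)), y t ∂mu01) ^ 2 := by
        rw [integral_xseq_mul, mul_pow, Real.sq_sqrt n.cast_nonneg]
    _ ≤ n * (1 / n * ∫ t in Ioc 0 (1 / (n : ℝ)), y t ^ 2 ∂mu01) := by gcongr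
    _ ≤ ∫ t in Ioc 0 (1 / (n : ℝ)), y t ^ 2 ∂mu01 := by
        rw [← mul_assoc]; exact mul_le_of_le_one_left ha hn

lemma tendsto_integral_xseq_mul {y : ℝ → ℝ} (hy : MemLp y 2 mu01) :
    Tendsto (fun n => ∫ t, xseq n t * y t ∂mu01) atTop (nhds 0) := by
  have htail :
      Tendsto (fun n : ℕ => √(∫ t in Ioc 0 (1 / (n : ℝ)), y t ^ 2 ∂mu01)) atTop (nhds 0) := by
    simpa using (tendsto_setIntegral_Ioc_zero_one_div hy.integrable_sq).sqrt
  exact squeeze_zero_norm (fun n => Real.abs_le_sqrt (sq_integral_xseq_mul_le hy n)) htail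

lemma cesaro_xseq {n : ℕ} {s : ℝ} (hs : 0 < s) :
    cesaro (xseq n) s = √n * min s (1 / n) / s := by
  have hmin : 0 ≤ min s (1 / (n : ℝ)) := le_min hs.le (by positivity)
  rw [cesaro, xseq_eq_indicator, integral_indicator_const _ measurableSet_Ioc,
    measureReal_restrict_apply measurableSet_Ioc, Ioc_inter_Ioc, max_self, min_comm,
    measureReal_def, Real.volume_Ioc, sub_zero, ENNReal.toReal_ofReal hmin, smul_eq_mul]
  ring

lemma cesaro_xseq_of_le {n : ℕ} {s : ℝ} (hs : 0 < s) (hsn : s ≤ 1 / n) :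
    cesaro (xseq n) s = √n := by
  rw [cesaro_xseq hs, min_eq_left hsn, mul_div_cancel_right₀ _ hs.ne']

lemma cesaro_xseq_of_ge {n : ℕ} {s : ℝ} (hs : 0 < s) (hsn : 1 / n ≤ s) :
    cesaro (xseq n) s = 1 / (√n * s) := by
  rw [cesaro_xseq hs, min_eq_right hsn, mul_one_div, Real.sqrt_div_self', div_div]

lemma cesaro_xseq_nonneg (n : ℕ) {s : ℝ} (hs : 0 < s) : 0 ≤ cesaro (xseq n) s := by
  rw [cesaro_xseq hs]
  exact div_nonneg (mul_nonneg (Real.sqrt_nonneg _) (le_min hs.le (by positivity))) hs.le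

lemma cesaro_xseq_le_sqrt (n : ℕ) {s : ℝ} (hs : 0 < s) : cesaro (xseq n) s ≤ √n := by
  rw [cesaro_xseq hs, div_le_iff₀ hs]
  exact mul_le_mul_of_nonneg_left (min_le_left _ _) (Real.sqrt_nonneg _)

lemma cesaro_xseq_le_one_div (n : ℕ) {s : ℝ} (hs : 0 < s) :
    cesaro (xseq n) s ≤ 1 / (√n * s) := by
  rw [cesaro_xseq hs, ← div_div, ← Real.sqrt_div_self', ← mul_one_div (√n)]
  gcongr
  exact min_le_right _ _

lemma tendsto_cesaro_xseq {s : ℝ} (hs : 0 < s) :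
    Tendsto (fun n => cesaro (xseq n) s) atTop (nhds 0) := by
  have hlim : Tendsto (fun n : ℕ => 1 / (√n * s)) atTop (nhds 0) := by
    convert (tendsto_one_div_atTop_nhds_zero_nat.sqrt).div_const s using 2 with n
    · rw [Real.sqrt_div' _ n.cast_nonneg, Real.sqrt_one, div_div]
    · simp
  exact squeeze_zero (fun n => cesaro_xseq_nonneg n hs) (fun n => cesaro_xseq_le_one_div n hs) hlim

lemma ae_mem_Ioc_mu01 : ∀ᵐ s ∂mu01, s ∈ Ioc 0 1 := ae_restrict_mem measurableSet_Ioc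

lemma aestronglyMeasurable_cesaro_xseq (n : ℕ) :
    AEStronglyMeasurable (cesaro (xseq n)) mu01 := by
  have hmeas : Measurable fun s : ℝ => √n * min s (1 / n) / s := by fun_prop
  refine hmeas.aestronglyMeasurable.congr ?_
  filter_upwards [ae_mem_Ioc_mu01] with s hs
  exact (cesaro_xseq hs.1).symm

lemma integrable_sq_cesaro_xseq (n : ℕ) : Integrable (fun s => cesaro (xseq n) s ^ 2) mu01 := by
  refine Integrable.of_bound ((aestronglyMeasurable_cesaro_xseq n).pow 2) n ?_
  filter_upwards [ae_mem_Ioc_mu01] with s hs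
  rw [Real.norm_of_nonneg (sq_nonneg _), ← Real.sq_sqrt n.cast_nonneg]
  gcongr
  exacts [cesaro_xseq_nonneg n hs.1, cesaro_xseq_le_sqrt n hs.1]

lemma integral_sq_cesaro_xseq {n : ℕ} (hn : 1 ≤ n) :
    ∫ s, cesaro (xseq n) s ^ 2 ∂mu01 = 2 - 1 / n := by
  have hn0 : (0 : ℝ) < n := by exact_mod_cast hn
  have hpos : (0 : ℝ) < 1 / n := by positivity
  have hint : IntegrableOn (fun s => cesaro (xseq n) s ^ 2) (Ioc 0 1) :=
    integrable_sq_cesaro_xseq n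
  have hnear : ∫ s in Ioc 0 (1 / (n : ℝ)), cesaro (xseq n) s ^ 2 = 1 := by
    rw [setIntegral_congr_fun measurableSet_Ioc (g := fun _ => (n : ℝ)) fun s hs => by
      rw [cesaro_xseq_of_le hs.1 hs.2, Real.sq_sqrt hn0.le]]
    rw [setIntegral_const, measureReal_def, Real.volume_Ioc, sub_zero,
      ENNReal.toReal_ofReal hpos.le, smul_eq_mul, one_div_mul_cancel hn0.ne']
  have hfar : ∫ s in Ioc (1 / (n : ℝ)) 1, cesaro (xseq n) s ^ 2 = 1 - 1 / n := by
    rw [setIntegral_congr_fun measurableSet_Ioc (g := fun s => (n : ℝ)⁻¹ * s ^ (-2 : ℤ))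
      fun s hs => by
        beta_reduce
        rw [cesaro_xseq_of_ge (hpos.trans hs.1) hs.1.le, div_pow, mul_pow, Real.sq_sqrt hn0.le,
          one_pow, zpow_neg, zpow_ofNat, one_div, mul_inv]]
    rw [← intervalIntegral.integral_of_le (one_div_natCast_le_one n),
      intervalIntegral.integral_const_mul, integral_zpow
        (Or.inr ⟨by norm_num, by
          rw [uIcc_of_le (one_div_natCast_le_one n)]; exact fun h0 => h0.1.not_gt hpos⟩)]
    norm_num
    field_simp
    ring
  rw [mu01, ← Ioc_union_Ioc_eq_Ioc hpos.le (one_div_natCast_le_one n),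
    setIntegral_union (Ioc_disjoint_Ioc_of_le le_rfl) measurableSet_Ioc
      (hint.mono_set (Ioc_subset_Ioc_right (one_div_natCast_le_one n)))
      (hint.mono_set (Ioc_subset_Ioc_left hpos.le)), hnear, hfar]
  ring

lemma eLpNorm_xseq {n : ℕ} (hn : 1 ≤ n) : eLpNorm (xseq n) 2 mu01 = 1 := by
  have hn0 : (0 : ℝ) < n := by exact_mod_cast hn
  rw [xseq_eq_indicator, eLpNorm_indicator_const measurableSet_Ioc two_ne_zero ENNReal.ofNat_ne_top,
    mu01_Ioc_zero (one_div_natCast_le_one n), ENNReal.toReal_ofNat,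
    ENNReal.ofReal_rpow_of_nonneg (by positivity) (by norm_num), ← Real.sqrt_eq_rpow,
    Real.enorm_eq_ofReal (Real.sqrt_nonneg _), ← ENNReal.ofReal_mul (Real.sqrt_nonneg _),
    ← Real.sqrt_mul hn0.le, mul_one_div_cancel hn0.ne', Real.sqrt_one, ENNReal.ofReal_one]

/-- `Cxₙ = xₙ` on the support `(0, 1/n]` of `xₙ`. -/
lemma one_le_eLpNorm_cesaro_xseq {n : ℕ} (hn : 1 ≤ n) :
    1 ≤ eLpNorm (cesaro (xseq n)) 2 mu01 := by
  refine (eLpNorm_xseq hn).symm.le.trans (eLpNorm_mono_ae ?_)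
  filter_upwards [ae_mem_Ioc_mu01] with s hs
  by_cases hsn : s ∈ Ioc 0 (1 / (n : ℝ))
  · rw [cesaro_xseq_of_le hsn.1 hsn.2, xseq_eq_indicator, indicator_of_mem hsn]
  · rw [xseq_eq_indicator, indicator_of_notMem hsn, norm_zero]
    exact norm_nonneg _

lemma not_tendsto_eLpNorm_cesaro_xseq_sub {φ : ℕ → ℕ} (hφ : StrictMono φ) {g : ℝ → ℝ}
    (hg : AEStronglyMeasurable g mu01) :
    ¬ Tendsto (fun k => eLpNorm (fun s => cesaro (xseq (φ k)) s - g s) 2 mu01) atTop (nhds 0) := by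
  intro hlim
  have hg0 : g =ᵐ[mu01] 0 := by
    refine ae_eq_zero_of_tendsto_eLpNorm_sub two_ne_zero
      (fun k => aestronglyMeasurable_cesaro_xseq (φ k)) hg ?_ hlim
    filter_upwards [ae_mem_Ioc_mu01] with s hs
    exact (tendsto_cesaro_xseq hs.1).comp hφ.tendsto_atTop
  have hsmall := hlim.eventually (gt_mem_nhds zero_lt_one)
  obtain ⟨k, hk, hk1⟩ := (hsmall.and (eventually_ge_atTop 1)).exists
  refine hk.not_ge ((one_le_eLpNorm_cesaro_xseq (hk1.trans (hφ.le_apply))).trans_eq ?_)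
  refine eLpNorm_congr_ae ?_
  filter_upwards [hg0] with s hs
  simp [hs]

/-- The Cesàro operator is not compact: `xₙ ⇀ 0` weakly in L²(0,1), but
`‖Cxₙ‖² → 2`, and in particular no subsequence of `(Cxₙ)` converges strongly in L²(0,1). -/
theorem cesaro_not_compact :
    (∀ y : ℝ → ℝ, MemLp y 2 mu01 →
      Tendsto (fun n => ∫ t, xseq n t * y t ∂mu01) atTop (nhds 0)) ∧
    (Tendsto (fun n => ∫ s, (cesaro (xseq n) s) ^ 2 ∂mu01) atTop (nhds 2)) ∧
    (∀ φ : ℕ → ℕ, StrictMono φ → ∀ g : ℝ → ℝ, MemLp g 2 mu01 →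
      ¬ Tendsto (fun k => eLpNorm (fun s => cesaro (xseq (φ k)) s - g s) 2 mu01)
        atTop (nhds 0)) := by
  refine ⟨fun y hy => tendsto_integral_xseq_mul hy, ?_,
    fun φ hφ g hg => not_tendsto_eLpNorm_cesaro_xseq_sub hφ hg.aestronglyMeasurable⟩
  have hlim : Tendsto (fun n : ℕ => 2 - 1 / (n : ℝ)) atTop (nhds 2) := by
    simpa using tendsto_one_div_atTop_nhds_zero_nat.const_sub (2 : ℝ)
  refine hlim.congr' ?_
  filter_upwards [eventually_ge_atTop 1] with n hn
  exact (integral_sq_cesaro_xseq hn).symm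
end

section
/- For xₙ(t) = √n·cos(nt), one has [Cxₙ](s) = sin(ns)/(√n·s) for 0 < s ≤ 1, and the sequence ‖Cxₙ‖²_{L²(0,1)} = ∫₀¹ sin²(ns)/(n s²) ds converges to a finite limit (namely ∫₀^∞ sin²(u)/u² du = π/2) as n → ∞. -/
open MeasureTheory Set Filter Real

/-- The sequence `xₙ(t) = √n · cos(nt)`. -/
noncomputable def xcos (n : ℕ) : ℝ → ℝ := fun t => Real.sqrt n * Real.cos (n * t)

/-!
The Cesàro formula is the fundamental theorem of calculus. The substitution `u = n s` turns
`∫₀¹ sin²(ns)/(n s²) ds` into `∫₀ⁿ sin²u/u² du`, so the limit is `∫₀^∞ sin²u/u² du`. To evaluate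
it, write `1/u² = ∫₀^∞ t e^{-ut} dt` and swap the integrals (Tonelli): the Laplace transform
`∫₀^∞ e^{-tu} sin²u du = 2/(t(t²+4))`, read off from `Re ∫₀^∞ e^{(-t+bi)u} du = t/(t²+b²)`,
leaves `∫₀^∞ 2/(t²+4) dt = π/2`.
-/

theorem cesaro_const_mul_cos (a : ℝ) {b s : ℝ} (hb : b ≠ 0) (hs : 0 < s) :
    cesaro (fun t => a * cos (b * t)) s = a * sin (b * s) / (b * s) := by
  rw [cesaro, ← intervalIntegral.integral_of_le hs.le, intervalIntegral.integral_const_mul,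
    intervalIntegral.integral_comp_mul_left cos hb, mul_zero, integral_cos, sin_zero, sub_zero,
    smul_eq_mul]
  field_simp

theorem cesaro_xcos {n : ℕ} (hn : 0 < n) {s : ℝ} (hs : 0 < s) :
    cesaro (xcos n) s = sin (n * s) / (√n * s) := by
  have hn' : (0:ℝ) < n := by exact_mod_cast hn
  unfold xcos
  rw [cesaro_const_mul_cos _ hn'.ne' hs]
  field_simp
  rw [sq_sqrt hn'.le]

theorem re_exp_neg_add_mul_I_mul (t b u : ℝ) :
    (Complex.exp ((-t + b * Complex.I) * u)).re = exp (-(t * u)) * cos (b * u) := by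
  simp [Complex.exp_re]

theorem integrableOn_exp_neg_mul_mul_cos {t : ℝ} (ht : 0 < t) (b : ℝ) :
    IntegrableOn (fun u => exp (-(t * u)) * cos (b * u)) (Ioi 0) := by
  simpa only [IntegrableOn, RCLike.re_to_complex, re_exp_neg_add_mul_I_mul] using
    (integrableOn_exp_mul_complex_Ioi (a := -t + b * Complex.I) (by simpa) 0).re

theorem integral_exp_neg_mul_mul_cos {t : ℝ} (ht : 0 < t) (b : ℝ) :
    ∫ u in Ioi (0:ℝ), exp (-(t * u)) * cos (b * u) = t / (t ^ 2 + b ^ 2) := by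
  have ha : (-t + b * Complex.I).re < 0 := by simpa
  simp_rw [← re_exp_neg_add_mul_I_mul, ← RCLike.re_to_complex]
  rw [integral_re (integrableOn_exp_mul_complex_Ioi ha 0), integral_exp_mul_complex_Ioi ha 0]
  simp [Complex.div_re, Complex.normSq, sq]

/-- Written with `cos (0 * u)` so that both terms are instances of the cosine Laplace transform. -/
theorem exp_neg_mul_mul_sin_sq_eq (t u : ℝ) :
    exp (-(t * u)) * sin u ^ 2 =
      (exp (-(t * u)) * cos (0 * u) - exp (-(t * u)) * cos (2 * u)) / 2 := by
  rw [zero_mul, cos_zero, cos_two_mul, cos_sq']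
  ring

theorem lintegral_exp_neg_mul_mul_sin_sq {t : ℝ} (ht : 0 < t) :
    ∫⁻ u in Ioi 0, ENNReal.ofReal (exp (-(t * u)) * sin u ^ 2) =
      ENNReal.ofReal (2 / (t * (t ^ 2 + 4))) := by
  have hcos0 := integrableOn_exp_neg_mul_mul_cos ht 0
  have hcos2 := integrableOn_exp_neg_mul_mul_cos ht 2
  have hint : IntegrableOn (fun u => exp (-(t * u)) * sin u ^ 2) (Ioi 0) := by
    simp_rw [exp_neg_mul_mul_sin_sq_eq]
    exact (hcos0.sub hcos2).div_const 2
  rw [← ofReal_integral_eq_lintegral_ofReal hint (ae_of_all _ fun u => by positivity)]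
  simp_rw [exp_neg_mul_mul_sin_sq_eq]
  rw [integral_div, integral_sub hcos0 hcos2, integral_exp_neg_mul_mul_cos ht,
    integral_exp_neg_mul_mul_cos ht]
  congr 1
  field_simp
  ring

theorem lintegral_mul_exp_neg_mul {u : ℝ} (hu : 0 < u) :
    ∫⁻ t in Ioi 0, ENNReal.ofReal (t * exp (-(u * t))) = ENNReal.ofReal (u ^ 2)⁻¹ := by
  have h := integral_rpow_mul_exp_neg_mul_Ioi two_pos hu
  simp only [show (2:ℝ) - 1 = 1 by norm_num, rpow_one, rpow_two, Gamma_two, mul_one, one_div,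
    inv_pow] at h
  rw [← ofReal_integral_eq_lintegral_ofReal (.of_integral_ne_zero (by rw [h]; positivity))
    ((ae_restrict_iff' measurableSet_Ioi).2 (ae_of_all _ fun t ht =>
      mul_nonneg (le_of_lt ht) (exp_pos _).le)), h]

theorem integral_two_div_sq_add_four : ∫ t in Ioi (0:ℝ), 2 / (t ^ 2 + 4) = π / 2 := by
  have h := integral_comp_mul_left_Ioi (fun t : ℝ => 2 / (t ^ 2 + 4)) 0 two_pos
  have hg : ∀ x : ℝ, 2 / ((2 * x) ^ 2 + 4) = 2⁻¹ * (1 + x ^ 2)⁻¹ := fun x => by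
    field_simp; ring
  simp only [hg, integral_const_mul, integral_Ioi_inv_one_add_sq, mul_zero, arctan_zero,
    smul_eq_mul] at h
  linarith

theorem lintegral_sin_sq_div_sq :
    ∫⁻ u in Ioi 0, ENNReal.ofReal (sin u ^ 2 / u ^ 2) = ENNReal.ofReal (π / 2) := by
  let F : ℝ → ℝ → ENNReal := fun u t => ENNReal.ofReal (sin u ^ 2 * (t * exp (-(u * t))))
  have hF : Measurable (Function.uncurry F) := by
    unfold F Function.uncurry; fun_prop
  calc ∫⁻ u in Ioi 0, ENNReal.ofReal (sin u ^ 2 / u ^ 2)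
      = ∫⁻ u in Ioi 0, ∫⁻ t in Ioi 0, F u t := by
        refine setLIntegral_congr_fun measurableSet_Ioi fun u (hu : 0 < u) => ?_
        simp only [F, ENNReal.ofReal_mul (sq_nonneg _)]
        rw [lintegral_const_mul' _ _ ENNReal.ofReal_ne_top, lintegral_mul_exp_neg_mul hu,
          div_eq_mul_inv, ENNReal.ofReal_mul (sq_nonneg _)]
    _ = ∫⁻ t in Ioi 0, ∫⁻ u in Ioi 0, F u t := lintegral_lintegral_swap hF.aemeasurable
    _ = ∫⁻ t in Ioi 0, ENNReal.ofReal (2 / (t ^ 2 + 4)) := by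
        refine setLIntegral_congr_fun measurableSet_Ioi fun t (ht : 0 < t) => ?_
        have hF_eq : ∀ u,
            F u t = ENNReal.ofReal t * ENNReal.ofReal (exp (-(t * u)) * sin u ^ 2) := fun u => by
          rw [← ENNReal.ofReal_mul ht.le, mul_comm t u]; dsimp only [F]; congr 1; ring
        simp only [hF_eq]
        rw [lintegral_const_mul' _ _ ENNReal.ofReal_ne_top, lintegral_exp_neg_mul_mul_sin_sq ht,
          ← ENNReal.ofReal_mul ht.le]
        congr 1
        field_simp
    _ = ENNReal.ofReal (π / 2) := by
        rw [← integral_two_div_sq_add_four, ofReal_integral_eq_lintegral_ofReal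
          (.of_integral_ne_zero (by rw [integral_two_div_sq_add_four]; positivity))
          (ae_of_all _ fun t => by positivity)]

theorem integrableOn_sin_sq_div_sq : IntegrableOn (fun u => sin u ^ 2 / u ^ 2) (Ioi 0) := by
  refine ⟨(by fun_prop : Measurable fun u : ℝ => sin u ^ 2 / u ^ 2).aestronglyMeasurable,
     (hasFiniteIntegral_iff_ofReal (ae_of_all _ fun u => by positivity)).2 ?_⟩
  rw [lintegral_sin_sq_div_sq]
  exact ENNReal.ofReal_lt_top

theorem integral_sin_sq_div_sq : ∫ u in Ioi (0:ℝ), sin u ^ 2 / u ^ 2 = π / 2 := by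
  rw [← ENNReal.ofReal_eq_ofReal_iff (integral_nonneg fun u => by positivity) (by positivity),
    ofReal_integral_eq_lintegral_ofReal integrableOn_sin_sq_div_sq
      (ae_of_all _ fun u => by positivity), lintegral_sin_sq_div_sq]

theorem integral_Ioc_sin_mul_sq_div {c : ℝ} (hc : 0 < c) :
    ∫ s in Ioc 0 1, sin (c * s) ^ 2 / (c * s ^ 2) = ∫ u in (0:ℝ)..c, sin u ^ 2 / u ^ 2 := by
  have h := intervalIntegral.integral_comp_mul_left (fun u => sin u ^ 2 / u ^ 2) hc.ne'
    (a := 0) (b := 1)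
  rw [mul_zero, mul_one] at h
  rw [← intervalIntegral.integral_of_le zero_le_one]
  calc ∫ s in (0:ℝ)..1, sin (c * s) ^ 2 / (c * s ^ 2)
      = ∫ s in (0:ℝ)..1, c * (sin (c * s) ^ 2 / (c * s) ^ 2) :=
        intervalIntegral.integral_congr fun s _ => by field_simp
    _ = ∫ u in (0:ℝ)..c, sin u ^ 2 / u ^ 2 := by
        rw [intervalIntegral.integral_const_mul, h, smul_eq_mul, mul_inv_cancel_left₀ hc.ne']

/-- For `xₙ(t) = √n cos(nt)`: `[Cxₙ](s) = sin(ns)/(√n s)` on (0,1], and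
`‖Cxₙ‖² = ∫₀¹ sin²(ns)/(n s²) ds → π/2`. -/
theorem cesaro_xcos_formula :
    (∀ n : ℕ, 0 < n → ∀ s : ℝ, 0 < s → s ≤ 1 →
      cesaro (xcos n) s = Real.sin (n * s) / (Real.sqrt n * s)) ∧
    Tendsto (fun n : ℕ => ∫ s in Ioc (0:ℝ) 1, Real.sin (n * s) ^ 2 / (n * s ^ 2))
      atTop (nhds (π / 2)) := by
  refine ⟨fun n hn s hs _ => cesaro_xcos hn hs, ?_⟩
  have h := intervalIntegral_tendsto_integral_Ioi 0 integrableOn_sin_sq_div_sq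
    tendsto_natCast_atTop_atTop
  rw [integral_sin_sq_div_sq] at h
  refine h.congr' ((eventually_gt_atTop 0).mono fun n hn => ?_)
  exact (integral_Ioc_sin_mul_sq_div (Nat.cast_pos.2 hn)).symm
end

section
/- For the Legendre polynomials Lᵢ on [−1,1], define fᵢ(t) = (Lᵢ(2t−1) − Lᵢ(−1))/(2t) for t ∈ (0,1]. Then fᵢ(t) = Σ_{j=0}^{i−1} (−1)^{i+j−1}(2j+1)(Hᵢ − Hⱼ)·Lⱼ(2t−1), where Hₖ = Σ_{m=1}^{k} 1/m is the k-th harmonic number (H₀ = 0). -/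
open MeasureTheory Set Finset

/-- The Legendre polynomials on [-1,1], defined by the three-term recurrence
`(n+2)·L_{n+2}(x) = (2n+3)·x·L_{n+1}(x) - (n+1)·L_n(x)` with `L₀ = 1`, `L₁(x) = x`. -/
noncomputable def legendre : ℕ → ℝ → ℝ
  | 0 => fun _ => 1
  | 1 => fun x => x
  | (n + 2) => fun x =>
      ((2 * (n:ℝ) + 3) * x * legendre (n + 1) x - ((n:ℝ) + 1) * legendre n x) / ((n:ℝ) + 2)

/-- The `k`-th harmNum number `H_k = Σ_{m=1}^k 1/m` (with `H₀ = 0`). -/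
noncomputable def harmNum (k : ℕ) : ℝ := ∑ m ∈ Finset.range k, 1 / ((m:ℝ) + 1)

lemma legQ (n : ℕ) (x : ℝ) :
    (x + 1) * ∑ j ∈ Finset.range (n+1), (-1:ℝ)^(n+j) * (2*(j:ℝ)+1) * legendre j x
      = ((n:ℝ)+1) * (legendre n x + legendre (n+1) x) := by
  induction n with
  | zero => simp [legendre]; ring
  | succ n ih =>
    rw [Finset.sum_range_succ]
    have h1 : ∀ j, (-1:ℝ)^(n+1+j) = -(-1:ℝ)^(n+j) := by
      intro j
      rw [show n+1+j = (n+j)+1 from by ring, pow_succ]; ring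
    have h2 : ∑ j ∈ Finset.range (n+1), (-1:ℝ)^(n+1+j) * (2*(j:ℝ)+1) * legendre j x
        = -∑ j ∈ Finset.range (n+1), (-1:ℝ)^(n+j) * (2*(j:ℝ)+1) * legendre j x := by
      rw [← Finset.sum_neg_distrib]
      exact Finset.sum_congr rfl fun j _ => by rw [h1 j]; ring
    rw [h2, h1]
    have hpow2 : (-1:ℝ)^(n+(n+1)) = -1 := by
      rw [show n+(n+1) = 2*n+1 from by ring, pow_succ, pow_mul]; norm_num
    have h3 : legendre (n+1+1) x
        = ((2 * (n:ℝ) + 3) * x * legendre (n + 1) x - ((n:ℝ) + 1) * legendre n x) / ((n:ℝ) + 2) := rfl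
    have hn2 : ((n:ℝ) + 2) ≠ 0 := by positivity
    rw [hpow2, h3]
    push_cast
    field_simp
    linear_combination (-((n:ℝ)+2)) * ih

lemma legB (i : ℕ) (x : ℝ) :
    legendre i x = (-1:ℝ)^i + (x+1) * ∑ j ∈ Finset.range i,
      (-1:ℝ)^(i+j+1) * (2*(j:ℝ)+1) * (harmNum i - harmNum j) * legendre j x := by
  induction i with
  | zero => simp [legendre]
  | succ i ih =>
    have hi1 : ((i:ℝ)+1) ≠ 0 := by positivity
    have hH : harmNum (i+1) = harmNum i + 1/((i:ℝ)+1) := by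
      rw [harmNum, Finset.sum_range_succ]; rfl
    have hsum : ∑ j ∈ Finset.range (i+1),
          (-1:ℝ)^(i+1+j+1) * (2*(j:ℝ)+1) * (harmNum (i+1) - harmNum j) * legendre j x
        = -∑ j ∈ Finset.range i,
            (-1:ℝ)^(i+j+1) * (2*(j:ℝ)+1) * (harmNum i - harmNum j) * legendre j x
          + (1/((i:ℝ)+1)) * ∑ j ∈ Finset.range (i+1),
              (-1:ℝ)^(i+j) * (2*(j:ℝ)+1) * legendre j x := by
      have step : ∀ j : ℕ,
          (-1:ℝ)^(i+1+j+1) * (2*(j:ℝ)+1) * (harmNum (i+1) - harmNum j) * legendre j x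
          = -((-1:ℝ)^(i+j+1) * (2*(j:ℝ)+1) * (harmNum i - harmNum j) * legendre j x)
            + (1/((i:ℝ)+1)) * ((-1:ℝ)^(i+j) * (2*(j:ℝ)+1) * legendre j x) := by
        intro j
        rw [show i+1+j+1 = (i+j)+1+1 from by ring, show i+j+1 = (i+j)+1 from rfl,
          pow_succ, pow_succ, hH]
        ring
      calc ∑ j ∈ Finset.range (i+1),
          (-1:ℝ)^(i+1+j+1) * (2*(j:ℝ)+1) * (harmNum (i+1) - harmNum j) * legendre j x
          = ∑ j ∈ Finset.range (i+1),
            (-((-1:ℝ)^(i+j+1) * (2*(j:ℝ)+1) * (harmNum i - harmNum j) * legendre j x)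
              + (1/((i:ℝ)+1)) * ((-1:ℝ)^(i+j) * (2*(j:ℝ)+1) * legendre j x)) :=
            Finset.sum_congr rfl fun j _ => step j
        _ = _ := by
            rw [Finset.sum_add_distrib, ← Finset.mul_sum, ← Finset.sum_neg_distrib]
            congr 1
            rw [Finset.sum_range_succ]
            simp
    rw [hsum]
    have hQ := legQ i x
    have hQ' : 1/((i:ℝ)+1) * ((x+1) * ∑ j ∈ Finset.range (i+1),
          (-1:ℝ)^(i+j) * (2*(j:ℝ)+1) * legendre j x)
        = legendre i x + legendre (i+1) x := by
      rw [hQ]; field_simp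
    rw [pow_succ]
    linear_combination (-1:ℝ) * ih - hQ'

/-- Expansion of `fᵢ(t) = (Lᵢ(2t-1) - Lᵢ(-1))/(2t)` in shifted Legendre polynomials:
`fᵢ(t) = Σ_{j=0}^{i-1} (-1)^{i+j-1} (2j+1) (Hᵢ - Hⱼ) Lⱼ(2t-1)`. -/
theorem f_expansion (i : ℕ) (t : ℝ) (ht0 : 0 < t) (ht1 : t ≤ 1) :
    (legendre i (2 * t - 1) - legendre i (-1)) / (2 * t)
      = ∑ j ∈ Finset.range i,
          (-1 : ℝ) ^ (i + j + 1) * (2 * (j:ℝ) + 1) * (harmNum i - harmNum j)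
            * legendre j (2 * t - 1) := by
  have hB := legB i (2 * t - 1)
  have hA : legendre i (-1) = (-1:ℝ)^i := by
    have := legB i (-1)
    simpa using this
  have ht : (2 * t) ≠ 0 := by positivity
  rw [hA, hB, div_eq_iff ht]
  ring
end

section
/- Define qⱼ(x) = ∫_{−1}^{1} (Lⱼ(x) − Lⱼ(τ))/(x − τ) dτ for Legendre polynomials Lⱼ. Then qⱼ is a polynomial of degree j−1, the qⱼ satisfy the same three-term recurrence (j+1)qⱼ₊₁(x) = (2j+1)x·qⱼ(x) − j·qⱼ₋₁(x), and qⱼ(−1) = 2(−1)^{j−1}Hⱼ, where Hⱼ is the j-th harmonic number. -/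
open MeasureTheory Set

/-- `qⱼ(x) = ∫_{-1}^1 (Lⱼ(x) - Lⱼ(τ))/(x - τ) dτ`. -/
noncomputable def qleg (j : ℕ) (x : ℝ) : ℝ :=
  ∫ τ in Ioc (-1:ℝ) 1, (legendre j x - legendre j τ) / (x - τ)

section Aux
open Polynomial

noncomputable def legP : ℕ → Polynomial ℝ
  | 0 => 1
  | 1 => X
  | (n + 2) => C ((2*(n:ℝ)+3)/((n:ℝ)+2)) * X * legP (n+1) - C (((n:ℝ)+1)/((n:ℝ)+2)) * legP n

lemma legendre_eval : ∀ j x, legendre j x = (legP j).eval x := by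
  intro j
  induction j using Nat.strong_induction_on with
  | _ j ih =>
    match j with
    | 0 => intro x; simp [legendre, legP]
    | 1 => intro x; simp [legendre, legP]
    | (n+2) =>
      intro x
      have h1 := ih (n+1) (by omega)
      have h0 := ih n (by omega)
      have hn : ((n:ℝ)+2) ≠ 0 := by positivity
      simp [legendre, legP, h1, h0]
      field_simp
      try ring

lemma legendre_rec (n : ℕ) (y : ℝ) :
    ((n:ℝ)+2) * legendre (n+2) y = (2*(n:ℝ)+3) * y * legendre (n+1) y - ((n:ℝ)+1) * legendre n y := by
  have hn : ((n:ℝ)+2) ≠ 0 := by positivity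
  simp [legendre]
  field_simp

lemma legP_natDegree_le : ∀ j, (legP j).natDegree ≤ j := by
  intro j
  induction j using Nat.strong_induction_on with
  | _ j ih =>
    match j with
    | 0 => simp [legP]
    | 1 => simp [legP]
    | (n+2) =>
      have h1 := ih (n+1) (by omega)
      have h0 := ih n (by omega)
      rw [legP]
      apply le_trans (natDegree_sub_le _ _)
      simp only [max_le_iff]
      constructor
      · apply le_trans (natDegree_mul_le)
        have : (C ((2*(n:ℝ)+3)/((n:ℝ)+2)) * X).natDegree ≤ 1 := by
          apply le_trans (natDegree_mul_le); simp
        omega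
      · apply le_trans (natDegree_mul_le)
        simp only [natDegree_C, zero_add]
        omega

lemma legP_lead : ∀ j, 0 < (legP j).coeff j := by
  intro j
  induction j using Nat.strong_induction_on with
  | _ j ih =>
    match j with
    | 0 => simp [legP]
    | 1 => simp [legP]
    | (n+2) =>
      have h1 := ih (n+1) (by omega)
      have hd := legP_natDegree_le n
      have hz : (legP n).coeff (n+2) = 0 := coeff_eq_zero_of_natDegree_lt (by omega)
      rw [legP]
      rw [coeff_sub, mul_assoc, coeff_C_mul, coeff_C_mul, coeff_X_mul, hz]
      have : (0:ℝ) < (2*(n:ℝ)+3)/((n:ℝ)+2) := by positivity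
      simp only [mul_zero, sub_zero]
      positivity

lemma legP_natDegree (j : ℕ) : (legP j).natDegree = j := by
  refine le_antisymm (legP_natDegree_le j) (le_natDegree_of_ne_zero ?_)
  exact ne_of_gt (legP_lead j)

lemma legP_recP (n : ℕ) :
    C ((n:ℝ)+2) * legP (n+2) = C (2*(n:ℝ)+3) * X * legP (n+1) - C ((n:ℝ)+1) * legP n := by
  apply Polynomial.funext
  intro x
  simp only [eval_mul, eval_sub, eval_C, eval_X, ← legendre_eval]
  exact legendre_rec n x

lemma legP_AB : ∀ n : ℕ,
    (derivative (legP (n+1)) = X * derivative (legP n) + C ((n:ℝ)+1) * legP n) ∧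
    (X * derivative (legP (n+1)) = derivative (legP n) + C ((n:ℝ)+1) * legP (n+1)) := by
  intro n
  induction n with
  | zero => constructor <;> simp [legP]
  | succ n ih =>
    obtain ⟨hA, hB⟩ := ih
    have hrec := legP_recP n
    have hd := congrArg derivative hrec
    simp only [derivative_mul, derivative_C, derivative_X, zero_mul, mul_one, zero_add,
      derivative_sub, one_mul, add_mul] at hd
    have hC2 : (C ((n:ℝ)+2) : Polynomial ℝ) ≠ 0 := by
      simp only [ne_eq, C_eq_zero]; positivity
    have hA' : derivative (legP (n+2)) = X * derivative (legP (n+1)) + C ((n:ℝ)+2) * legP (n+1) := by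
      apply mul_left_cancel₀ hC2
      simp only [C_add, C_mul, C_1, map_ofNat] at hd hB ⊢
      linear_combination hd + (C (n:ℝ) + 1) * hB
    have hB' : X * derivative (legP (n+2)) = derivative (legP (n+1)) + C ((n:ℝ)+2) * legP (n+2) := by
      have hr := legP_recP n
      simp only [C_add, C_mul, C_1, map_ofNat] at hA hB hA' hr ⊢
      linear_combination X * hA' + X * hB - hA - hr
    have hcast : (((n+1:ℕ)):ℝ) + 1 = (n:ℝ) + 2 := by push_cast; ring
    rw [hcast]
    exact ⟨hA', hB'⟩

lemma legP_D (n : ℕ) :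
    derivative (legP (n+2)) - derivative (legP n) = C (2*(n:ℝ)+3) * legP (n+1) := by
  have hA := (legP_AB (n+1)).1
  have hB := (legP_AB n).2
  push_cast at hA
  simp only [C_add, C_mul, C_1, map_ofNat] at hA hB ⊢
  linear_combination hA + hB

lemma legendre_one : ∀ j, legendre j 1 = 1 := by
  intro j
  induction j using Nat.strong_induction_on with
  | _ j ih =>
    match j with
    | 0 => simp [legendre]
    | 1 => simp [legendre]
    | (n+2) =>
      have h1 := ih (n+1) (by omega)
      have h0 := ih n (by omega)
      have hn : ((n:ℝ)+2) ≠ 0 := by positivity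
      simp [legendre, h1, h0]
      field_simp
      ring

lemma legendre_negone : ∀ j, legendre j (-1) = (-1)^j := by
  intro j
  induction j using Nat.strong_induction_on with
  | _ j ih =>
    match j with
    | 0 => simp [legendre]
    | 1 => simp [legendre]
    | (n+2) =>
      have h1 := ih (n+1) (by omega)
      have h0 := ih n (by omega)
      have hn : ((n:ℝ)+2) ≠ 0 := by positivity
      simp only [legendre]
      rw [h1, h0, div_eq_iff hn, pow_succ, pow_succ]
      ring

lemma integral_legendre_zero (n : ℕ) : ∫ τ in Ioc (-1:ℝ) 1, legendre (n+1) τ = 0 := by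
  have key : ∫ τ in Ioc (-1:ℝ) 1, (legP (n+1)).eval τ = 0 := by
    rw [← intervalIntegral.integral_of_le (by norm_num : (-1:ℝ) ≤ 1)]
    set p : Polynomial ℝ := legP (n+2) - legP n with hp
    have hderiv : derivative p = C (2*(n:ℝ)+3) * legP (n+1) := by
      rw [hp, derivative_sub]; exact legP_D n
    have h23 : (2*(n:ℝ)+3) ≠ 0 := by positivity
    have hI : ∫ x in (-1:ℝ)..1, (derivative p).eval x = p.eval 1 - p.eval (-1) :=
      intervalIntegral.integral_deriv_eq_sub' _ (funext fun x => Polynomial.deriv p)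
        (fun x _ => (p.hasDerivAt x).differentiableAt)
        (derivative p).continuous.continuousOn
    rw [hderiv] at hI
    simp only [eval_mul, eval_C] at hI
    rw [intervalIntegral.integral_const_mul] at hI
    have hend : eval 1 p - eval (-1) p = 0 := by
      rw [hp]
      simp only [eval_sub, ← legendre_eval, legendre_one, legendre_negone]
      have : ((-1:ℝ))^(n+2) = (-1)^n := by rw [pow_succ, pow_succ]; ring
      rw [this]; ring
    rw [hend] at hI
    exact (mul_eq_zero.1 hI).resolve_left h23
  simp only [legendre_eval]
  exact key

noncomputable def cInt (m : ℕ) : ℝ := ∫ τ in Ioc (-1:ℝ) 1, τ^m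

lemma cInt_zero : cInt 0 = 2 := by
  simp [cInt, Real.volume_Ioc]
  norm_num

/-- the divided-difference polynomial sum -/
noncomputable def ddS (P : Polynomial ℝ) (x τ : ℝ) : ℝ :=
  ∑ k ∈ Finset.range (P.natDegree+1), ∑ i ∈ Finset.range k, (P.coeff k * x^i) * τ^(k-1-i)

lemma dd_eq (P : Polynomial ℝ) (x τ : ℝ) (h : τ ≠ x) :
    (P.eval x - P.eval τ)/(x - τ) = ddS P x τ := by
  have hxt : x - τ ≠ 0 := sub_ne_zero.2 (Ne.symm h)
  rw [div_eq_iff hxt, ddS]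
  rw [Finset.sum_mul]
  have : ∀ k ∈ Finset.range (P.natDegree+1),
      (∑ i ∈ Finset.range k, (P.coeff k * x^i) * τ^(k-1-i)) * (x - τ)
        = P.coeff k * x^k - P.coeff k * τ^k := by
    intro k _
    have := geom_sum₂_mul x τ k
    calc (∑ i ∈ Finset.range k, (P.coeff k * x^i) * τ^(k-1-i)) * (x - τ)
        = P.coeff k * ((∑ i ∈ Finset.range k, x^i * τ^(k-1-i)) * (x - τ)) := by
          simp only [Finset.sum_mul, Finset.mul_sum]
          exact Finset.sum_congr rfl fun i _ => by ring
      _ = P.coeff k * (x^k - τ^k) := by rw [geom_sum₂_mul]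
      _ = P.coeff k * x^k - P.coeff k * τ^k := by ring
  rw [Finset.sum_congr rfl this, Finset.sum_sub_distrib]
  rw [eval_eq_sum_range, eval_eq_sum_range]

lemma ddS_continuous (P : Polynomial ℝ) (x : ℝ) : Continuous (ddS P x) := by
  unfold ddS
  exact continuous_finset_sum _ fun k _ => continuous_finset_sum _ fun i _ =>
    continuous_const.mul (continuous_pow _)

lemma ae_eq_ddS (P : Polynomial ℝ) (x : ℝ) :
    (fun τ => (P.eval x - P.eval τ)/(x - τ)) =ᵐ[volume.restrict (Ioc (-1:ℝ) 1)] ddS P x := by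
  apply ae_restrict_of_ae
  have hx : ∀ᵐ τ : ℝ, τ ≠ x := by
    rw [ae_iff]
    simp only [ne_eq, not_not]
    rw [Set.setOf_eq_eq_singleton]
    exact measure_singleton x
  filter_upwards [hx] with τ hτ
  exact dd_eq P x τ hτ

lemma integrableOn_dd (P : Polynomial ℝ) (x : ℝ) :
    IntegrableOn (fun τ => (P.eval x - P.eval τ)/(x - τ)) (Ioc (-1:ℝ) 1) volume :=
  (((ddS_continuous P x).integrableOn_Ioc)).congr (ae_eq_ddS P x).symm

lemma int_rep (P : Polynomial ℝ) (x : ℝ) :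
    ∫ τ in Ioc (-1:ℝ) 1, (P.eval x - P.eval τ)/(x - τ)
      = ∑ k ∈ Finset.range (P.natDegree+1), ∑ i ∈ Finset.range k,
          (P.coeff k * x^i) * cInt (k-1-i) := by
  rw [integral_congr_ae (ae_eq_ddS P x)]
  unfold ddS
  rw [integral_finset_sum]
  · refine Finset.sum_congr rfl fun k _ => ?_
    rw [integral_finset_sum]
    · refine Finset.sum_congr rfl fun i _ => ?_
      rw [MeasureTheory.integral_const_mul]; rfl
    · intro i _
      exact (continuous_const.mul (continuous_pow _)).integrableOn_Ioc
  · intro k _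
    exact ((continuous_finset_sum _ fun i _ =>
      continuous_const.mul (continuous_pow _)) : Continuous _).integrableOn_Ioc

noncomputable def Qpol (j : ℕ) : Polynomial ℝ :=
  ∑ k ∈ Finset.range (j+1), ∑ i ∈ Finset.range k, C ((legP j).coeff k * cInt (k-1-i)) * X^i

lemma qleg_eq_eval (j : ℕ) (x : ℝ) : qleg j x = (Qpol j).eval x := by
  unfold qleg
  simp_rw [legendre_eval j]
  rw [int_rep, legP_natDegree]
  unfold Qpol
  rw [eval_finset_sum]
  refine Finset.sum_congr rfl fun k _ => ?_
  rw [eval_finset_sum]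
  refine Finset.sum_congr rfl fun i _ => ?_
  simp only [eval_mul, eval_C, eval_pow, eval_X]
  ring

lemma Qpol_coeff (j m : ℕ) :
    (Qpol j).coeff m
      = ∑ k ∈ Finset.range (j+1), if m < k then (legP j).coeff k * cInt (k-1-m) else 0 := by
  unfold Qpol
  rw [finset_sum_coeff]
  refine Finset.sum_congr rfl fun k _ => ?_
  rw [finset_sum_coeff]
  simp only [coeff_C_mul, coeff_X_pow, mul_ite, mul_one, mul_zero]
  rw [Finset.sum_ite_eq]
  simp [Finset.mem_range]

lemma Qpol_coeff_top (j : ℕ) (hj : 1 ≤ j) : (Qpol j).coeff (j-1) = 2 * (legP j).coeff j := by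
  rw [Qpol_coeff]
  rw [Finset.sum_eq_single j]
  · rw [if_pos (by omega)]
    have : j - 1 - (j-1) = 0 := by omega
    rw [this, cInt_zero]; ring
  · intro k hk hkj
    rw [Finset.mem_range] at hk
    rw [if_neg (by omega)]
  · intro h
    exact absurd (Finset.self_mem_range_succ j) h

lemma Qpol_coeff_gt (j m : ℕ) (hm : j - 1 < m) : (Qpol j).coeff m = 0 := by
  rw [Qpol_coeff]
  apply Finset.sum_eq_zero
  intro k hk
  rw [Finset.mem_range] at hk
  rw [if_neg (by omega)]

lemma part1 (j : ℕ) (hj : 1 ≤ j) : ∃ p : Polynomial ℝ, p ≠ 0 ∧ p.natDegree = j - 1 ∧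
    ∀ x : ℝ, qleg j x = p.eval x := by
  refine ⟨Qpol j, ?_, ?_, fun x => qleg_eq_eval j x⟩
  · intro h
    have := Qpol_coeff_top j hj
    rw [h] at this
    simp only [coeff_zero] at this
    have := legP_lead j
    nlinarith
  · refine le_antisymm ?_ (le_natDegree_of_ne_zero ?_)
    · rw [Polynomial.natDegree_le_iff_coeff_eq_zero]
      intro m hm
      exact Qpol_coeff_gt j m hm
    · rw [Qpol_coeff_top j hj]
      have := legP_lead j
      positivity

lemma ae_ne' (x : ℝ) : ∀ᵐ τ : ℝ, τ ≠ x := by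
  rw [ae_iff]
  simp only [ne_eq, not_not]
  rw [Set.setOf_eq_eq_singleton]
  exact measure_singleton x

lemma part2 (m : ℕ) (x : ℝ) :
    ((m:ℝ)+2) * qleg (m+2) x = (2*(m:ℝ)+3) * x * qleg (m+1) x - ((m:ℝ)+1) * qleg m x := by
  have hint : ∀ j : ℕ, IntegrableOn
      (fun τ => (legendre j x - legendre j τ)/(x - τ)) (Ioc (-1:ℝ) 1) volume := by
    intro j
    have := integrableOn_dd (legP j) x
    simpa only [← legendre_eval] using this
  have hpt : ∀ᵐ τ ∂(volume.restrict (Ioc (-1:ℝ) 1)),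
      (((m:ℝ)+2) * ((legendre (m+2) x - legendre (m+2) τ)/(x - τ))
        - (2*(m:ℝ)+3) * x * ((legendre (m+1) x - legendre (m+1) τ)/(x - τ)))
        + ((m:ℝ)+1) * ((legendre m x - legendre m τ)/(x - τ))
      = (2*(m:ℝ)+3) * legendre (m+1) τ := by
    apply ae_restrict_of_ae
    filter_upwards [ae_ne' x] with τ hτ
    have hxt : x - τ ≠ 0 := sub_ne_zero.2 (Ne.symm hτ)
    have hx := legendre_rec m x
    have ht := legendre_rec m τ
    field_simp
    linear_combination hx - ht
  have hz : ∫ τ in Ioc (-1:ℝ) 1, legendre (m+1) τ = 0 := integral_legendre_zero m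
  have hz2 : ∫ τ in Ioc (-1:ℝ) 1, (2*(m:ℝ)+3) * legendre (m+1) τ = 0 := by
    rw [MeasureTheory.integral_const_mul, hz, mul_zero]
  have hkey : ((m:ℝ)+2) * qleg (m+2) x - (2*(m:ℝ)+3) * x * qleg (m+1) x
      + ((m:ℝ)+1) * qleg m x = 0 := by
    unfold qleg
    rw [← MeasureTheory.integral_const_mul, ← MeasureTheory.integral_const_mul,
      ← MeasureTheory.integral_const_mul,
      ← integral_sub ((hint (m+2)).const_mul _) ((hint (m+1)).const_mul _),
      ← integral_add (show IntegrableOn (fun τ =>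
          ((m:ℝ)+2) * ((legendre (m+2) x - legendre (m+2) τ)/(x - τ))
          - (2*(m:ℝ)+3) * x * ((legendre (m+1) x - legendre (m+1) τ)/(x - τ)))
          (Ioc (-1:ℝ) 1) volume from
          ((hint (m+2)).const_mul _).sub ((hint (m+1)).const_mul _))
        ((hint m).const_mul _)]
    rw [integral_congr_ae hpt]
    exact hz2
  linarith [hkey]

lemma qleg_zero (x : ℝ) : qleg 0 x = 0 := by
  unfold qleg
  simp [legendre]

lemma qleg_one_neg : qleg 1 (-1) = 2 := by
  unfold qleg
  rw [setIntegral_congr_fun measurableSet_Ioc (g := fun _ : ℝ => (1:ℝ))]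
  · simp [Real.volume_Ioc]
    norm_num
  · intro τ hτ
    have h : (-1:ℝ) - τ ≠ 0 := by
      have := hτ.1
      intro hc; linarith [sub_eq_zero.1 hc]
    simp only [legendre]
    exact div_self h

lemma harmNum_succ (n : ℕ) : harmNum (n+1) = harmNum n + 1/((n:ℝ)+1) := by
  unfold harmNum
  rw [Finset.sum_range_succ]

lemma part3 : ∀ j : ℕ, qleg j (-1) = 2 * (-1:ℝ)^(j+1) * harmNum j := by
  intro j
  induction j using Nat.strong_induction_on with
  | _ j ih =>
    match j with
    | 0 => simp [qleg_zero, harmNum]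
    | 1 => rw [qleg_one_neg]; simp [harmNum]; try norm_num
    | (n+2) =>
      have ih1 := ih (n+1) (by omega)
      have ih0 := ih n (by omega)
      have hrec := part2 n (-1)
      have h2 : ((n:ℝ)+2) ≠ 0 := by positivity
      have h1 : ((n:ℝ)+1) ≠ 0 := by positivity
      apply mul_left_cancel₀ h2
      rw [hrec, ih1, ih0, harmNum_succ (n+1), harmNum_succ n]
      push_cast
      simp only [pow_succ]
      field_simp
      ring

end Aux

/-- `qⱼ` is a polynomial of degree `j-1`, satisfies the Legendre three-term
recurrence `(j+1)q_{j+1}(x) = (2j+1)x·qⱼ(x) - j·q_{j-1}(x)`, and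
`qⱼ(-1) = 2(-1)^{j-1} Hⱼ`. -/
theorem qleg_properties :
    (∀ j : ℕ, 1 ≤ j → ∃ p : Polynomial ℝ, p ≠ 0 ∧ p.natDegree = j - 1 ∧
      ∀ x : ℝ, qleg j x = p.eval x) ∧
    (∀ j : ℕ, 1 ≤ j → ∀ x : ℝ,
      ((j:ℝ) + 1) * qleg (j + 1) x
        = (2 * (j:ℝ) + 1) * x * qleg j x - (j:ℝ) * qleg (j - 1) x) ∧
    (∀ j : ℕ, qleg j (-1) = 2 * (-1 : ℝ) ^ (j + 1) * harmNum j) := by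
  refine ⟨part1, ?_, part3⟩
  intro j hj x
  obtain ⟨m, rfl⟩ : ∃ m, j = m + 1 := ⟨j - 1, by omega⟩
  have h := part2 m x
  have c1 : ((m+1:ℕ):ℝ) + 1 = (m:ℝ) + 2 := by push_cast; ring
  have c2 : 2*((m+1:ℕ):ℝ) + 1 = 2*(m:ℝ) + 3 := by push_cast; ring
  have c3 : ((m+1:ℕ):ℝ) = (m:ℝ) + 1 := by push_cast; ring
  simp only [Nat.add_sub_cancel]
  rw [c1, c2, c3]
  exact h
end

section
/- Σ_{i=n+1}^{∞} 3/(2i(i−1)(2i−3)(2i+1)) = 1/(8n³ − 2n) for all n ≥ 1. -/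
/-!
With `u x = 1 / ((2x - 1) 2x (2x + 1))` (`invTripleProd` below), the summand for `i = x + 1` is
exactly `u x - u (x + 1)`, so the series telescopes; its terms are positive and `u x → 0`, hence the
tail from `n + 1` sums to `u n = 1 / (8n³ - 2n)`.
-/

open Filter Topology Finset

theorem hasSum_sub_succ_of_antitone {g : ℕ → ℝ} (hg : Antitone g)
    (hlim : Tendsto g atTop (𝓝 0)) : HasSum (fun k => g k - g (k + 1)) (g 0) := by
  rw [hasSum_iff_tendsto_nat_of_nonneg fun k => sub_nonneg.mpr (hg k.le_succ)]
  simp only [sum_range_sub']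
  simpa using tendsto_const_nhds.sub hlim (a := g 0)

noncomputable def invTripleProd (x : ℝ) : ℝ := ((2 * x - 1) * (2 * x) * (2 * x + 1))⁻¹

theorem tendsto_invTripleProd_atTop : Tendsto invTripleProd atTop (𝓝 0) := by
  have h2x : Tendsto (fun x : ℝ => 2 * x) atTop atTop := tendsto_id.const_mul_atTop two_pos
  have hprod := ((tendsto_atTop_add_const_right _ (-1) h2x).atTop_mul_atTop₀ h2x).atTop_mul_atTop₀
    (tendsto_atTop_add_const_right _ 1 h2x)
  exact hprod.inv_tendsto_atTop.congr fun x => by simp [invTripleProd, sub_eq_add_neg]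

theorem invTripleProd_sub_invTripleProd_add_one {x : ℝ} (hx : 1 ≤ x) :
    invTripleProd x - invTripleProd (x + 1) =
      3 / (2 * (x + 1) * ((x + 1) - 1) * (2 * (x + 1) - 3) * (2 * (x + 1) + 1)) := by
  have h1 : 2 * x - 1 ≠ 0 := by linarith
  have h2 : x ≠ 0 := by linarith
  have h3 : 2 * x + 1 ≠ 0 := by linarith
  have h4 : x + 1 ≠ 0 := by linarith
  have h5 : 2 * x + 3 ≠ 0 := by linarith
  simp only [invTripleProd]
  rw [show (x + 1) - 1 = x by ring, show 2 * (x + 1) - 3 = 2 * x - 1 by ring,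
    show 2 * (x + 1) + 1 = 2 * x + 3 by ring, show 2 * (x + 1) - 1 = 2 * x + 1 by ring]
  field_simp
  ring

theorem invTripleProd_add_one_le {x : ℝ} (hx : 1 ≤ x) : invTripleProd (x + 1) ≤ invTripleProd x := by
  rw [← sub_nonneg, invTripleProd_sub_invTripleProd_add_one hx]
  have : 0 < 2 * (x + 1) - 3 := by linarith
  have : 0 < (x + 1) - 1 := by linarith
  positivity

/-- Tail sum identity: `Σ_{i=n+1}^∞ 3/(2i(i-1)(2i-3)(2i+1)) = 1/(8n³-2n)` for `n ≥ 1`. -/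
theorem tail_sum_identity (n : ℕ) (hn : 1 ≤ n) :
    ∑' k : ℕ,
        (3 : ℝ) / (2 * ((n:ℝ) + 1 + (k:ℝ)) * (((n:ℝ) + 1 + (k:ℝ)) - 1)
          * (2 * ((n:ℝ) + 1 + (k:ℝ)) - 3) * (2 * ((n:ℝ) + 1 + (k:ℝ)) + 1))
      = 1 / (8 * (n:ℝ) ^ 3 - 2 * (n:ℝ)) := by
  set g : ℕ → ℝ := fun k => invTripleProd (n + k)
  have hge : ∀ k : ℕ, (1 : ℝ) ≤ n + k := fun k => by
    have : (1 : ℝ) ≤ n := by exact_mod_cast hn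
    linarith [k.cast_nonneg (α := ℝ)]
  have hshift : ∀ k : ℕ, (n : ℝ) + 1 + k = (n + k) + 1 := fun k => by ring
  have hterm : ∀ k : ℕ, g k - g (k + 1) =
      3 / (2 * ((n:ℝ) + 1 + k) * (((n:ℝ) + 1 + k) - 1)
        * (2 * ((n:ℝ) + 1 + k) - 3) * (2 * ((n:ℝ) + 1 + k) + 1)) := fun k => by
    simp only [g, hshift, Nat.cast_succ, ← add_assoc]
    exact invTripleProd_sub_invTripleProd_add_one (hge k)
  have hanti : Antitone g := antitone_nat_of_succ_le fun k => by
    simpa only [g, Nat.cast_succ, ← add_assoc] using invTripleProd_add_one_le (hge k)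
  have hlim : Tendsto g atTop (𝓝 0) :=
    tendsto_invTripleProd_atTop.comp (tendsto_atTop_add_const_left _ _ tendsto_natCast_atTop_atTop)
  rw [← tsum_congr hterm, (hasSum_sub_succ_of_antitone hanti hlim).tsum_eq]
  simp only [g, invTripleProd, Nat.cast_zero, add_zero, one_div]
  ring
end
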